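/- arXiv:1809.05933 — 3 statements merged into one kernel-verified Lean document; each statement's English description precedes it below -/
import Mathlib

section
/- Let γ > 0 and let X^τ and X_γ^τ be the perceptions generated from the same initial value X⁰ and the same savings sequence S̄¹, S̄², … by the smoothing rule, where X^τ uses the raw savings S̄^τ (Model I) and X_γ^τ uses the thresholded savings S̄_γ^τ defined by S̄_γ^τ = 0 if 0 ≤ S̄^τ < γ and S̄_γ^τ = S̄^τ otherwise (Model III). Then for every τ ≥ 0, |X_γ^τ − X^τ| ≤ γ(1 − (1−w)^τ) ≤ γ: the bounded-rationality threshold perturbs the perception by at most γ. -/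
/-! The difference of the two perceptions obeys the same smoothing rule, driven by the
difference of the savings, which thresholding keeps within `γ`. Hence the error `e τ` satisfies
`e (τ + 1) ≤ (1 - w) e τ + w γ` with `e 0 = 0`, and `γ (1 - (1 - w) ^ τ)` solves this recursion
with equality. -/

lemma abs_threshold_sub_le {γ : ℝ} (hγ : 0 ≤ γ) (s : ℝ) :
    |(if 0 ≤ s ∧ s < γ then 0 else s) - s| ≤ γ := by
  split_ifs with hs
  · rw [zero_sub, abs_neg, abs_of_nonneg hs.1]
    exact hs.2.le
  · simpa using hγ

lemma abs_smoothing_sub_le {w γ : ℝ} (hw0 : 0 ≤ w) (hw1 : w ≤ 1) {X Y a b : ℕ → ℝ}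
    (h0 : Y 0 = X 0) (hab : ∀ τ, |b (τ + 1) - a (τ + 1)| ≤ γ)
    (hX : ∀ τ, X (τ + 1) = (1 - w) * X τ + w * a (τ + 1))
    (hY : ∀ τ, Y (τ + 1) = (1 - w) * Y τ + w * b (τ + 1)) (τ : ℕ) :
    |Y τ - X τ| ≤ γ * (1 - (1 - w) ^ τ) := by
  induction τ with
  | zero => simp [h0]
  | succ n ih =>
    have hdiff : Y (n + 1) - X (n + 1) = (1 - w) * (Y n - X n) + w * (b (n + 1) - a (n + 1)) := by
      rw [hX, hY]; ring
    calc |Y (n + 1) - X (n + 1)|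
        ≤ |(1 - w) * (Y n - X n)| + |w * (b (n + 1) - a (n + 1))| := hdiff ▸ abs_add_le _ _
      _ = (1 - w) * |Y n - X n| + w * |b (n + 1) - a (n + 1)| := by
          rw [abs_mul, abs_mul, abs_of_nonneg (sub_nonneg.2 hw1), abs_of_nonneg hw0]
      _ ≤ (1 - w) * (γ * (1 - (1 - w) ^ n)) + w * γ := by
          gcongr
          exact hab n
      _ = γ * (1 - (1 - w) ^ (n + 1)) := by ring

lemma mul_one_sub_pow_le {w γ : ℝ} (hw1 : w ≤ 1) (hγ : 0 ≤ γ) (τ : ℕ) :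
    γ * (1 - (1 - w) ^ τ) ≤ γ :=
  mul_le_of_le_one_right hγ (sub_le_self _ (pow_nonneg (sub_nonneg.2 hw1) τ))

/-- the bounded-rationality threshold γ of Model III perturbs the
smoothed perception by at most γ(1 − (1−w)^τ) ≤ γ relative to Model I. -/
theorem threshold_perturbation_bound (w γ : ℝ) (hw0 : 0 < w) (hw1 : w < 1) (hγ : 0 < γ)
    (X Xγ S Sγ : ℕ → ℝ) (h0 : Xγ 0 = X 0)
    (hSγ : ∀ τ : ℕ, Sγ τ = if 0 ≤ S τ ∧ S τ < γ then 0 else S τ)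
    (hX : ∀ τ : ℕ, X (τ + 1) = (1 - w) * X τ + w * S (τ + 1))
    (hXγ : ∀ τ : ℕ, Xγ (τ + 1) = (1 - w) * Xγ τ + w * Sγ (τ + 1)) :
    ∀ τ : ℕ, |Xγ τ - X τ| ≤ γ * (1 - (1 - w) ^ τ) ∧ γ * (1 - (1 - w) ^ τ) ≤ γ := by
  have hS : ∀ τ, |Sγ (τ + 1) - S (τ + 1)| ≤ γ := fun τ =>
    hSγ (τ + 1) ▸ abs_threshold_sub_le hγ.le _
  exact fun τ => ⟨abs_smoothing_sub_le hw0.le hw1.le h0 hS hX hXγ τ,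
    mul_one_sub_pow_le hw1.le hγ.le τ⟩
end

section
/- Let t₀ < t_f, let P be a nonempty finite set, let g_p ∈ L¹[t₀,t_f] for each p ∈ P, and let Q > 0. Then there exists η ∈ ℝ such that ∑_{p∈P} ∫_{t₀}^{t_f} max(g_p(t) + η, 0) dt = Q; that is, the nonlinear equation for the dual variable in Step 2 of the day-to-day algorithm always has a solution. -/
/-!
For a finite nonzero measure `μ` and integrable `f`, the map `η ↦ ∫ max (f + η) 0 ∂μ` is
`μ(univ)`-Lipschitz (since `max (· + η) 0` is 1-Lipschitz in `η`), tends to `0` as `η → -∞` by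
dominated convergence with bound `max f 0`, and is bounded below by `∫ f + η μ(univ)`, so tends
to `+∞` as `η → ∞`. A finite sum of such maps inherits these properties (one summand suffices for
the growth, all being nonnegative), and the intermediate value theorem hits every `Q > 0`.
-/

open MeasureTheory Filter Topology

section PositivePartShift

variable {α : Type*} [MeasurableSpace α] {μ : Measure α} {f : α → ℝ}

theorem lipschitzWith_integral_max_add [IsFiniteMeasure μ] (hf : Integrable f μ) :
    LipschitzWith (μ.real Set.univ).toNNReal (fun η => ∫ t, max (f t + η) 0 ∂μ) := by
  have hint : ∀ η : ℝ, Integrable (fun t => max (f t + η) 0) μ := fun η =>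
    (hf.add (integrable_const η)).pos_part
  refine LipschitzWith.of_dist_le_mul fun x y => ?_
  rw [Real.dist_eq, Real.dist_eq, ← integral_sub (hint x) (hint y),
    Real.coe_toNNReal _ measureReal_nonneg, mul_comm, ← Real.norm_eq_abs]
  refine norm_integral_le_of_norm_le_const (Eventually.of_forall fun t => ?_)
  simpa using abs_max_sub_max_le_abs (f t + x) (f t + y) 0

theorem tendsto_integral_max_add_atBot (hf : Integrable f μ) :
    Tendsto (fun η => ∫ t, max (f t + η) 0 ∂μ) atBot (𝓝 0) := by
  have hlim := tendsto_integral_filter_of_dominated_convergence (μ := μ) (l := atBot)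
    (F := fun η t => max (f t + η) 0) (f := fun _ => 0) (fun t => max (f t) 0)
    (Eventually.of_forall fun η =>
      (hf.aestronglyMeasurable.add aestronglyMeasurable_const).sup aestronglyMeasurable_const)
    ?_ hf.pos_part ?_
  · simpa using hlim
  · filter_upwards [eventually_le_atBot 0] with η hη
    refine Eventually.of_forall fun t => ?_
    rw [Real.norm_of_nonneg (le_max_right _ _)]
    exact max_le_max (by linarith) le_rfl
  · refine Eventually.of_forall fun t => tendsto_const_nhds.congr' ?_
    filter_upwards [eventually_le_atBot (-f t)] with η hη
    exact (max_eq_right (by linarith)).symm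

theorem integral_add_mul_le_integral_max_add [IsFiniteMeasure μ] (hf : Integrable f μ) (η : ℝ) :
    ∫ t, f t ∂μ + η * μ.real Set.univ ≤ ∫ t, max (f t + η) 0 ∂μ := by
  calc ∫ t, f t ∂μ + η * μ.real Set.univ = ∫ t, (f t + η) ∂μ := by
        rw [integral_add hf (integrable_const η), integral_const, smul_eq_mul, mul_comm]
    _ ≤ ∫ t, max (f t + η) 0 ∂μ :=
        integral_mono (hf.add (integrable_const η)) (hf.add (integrable_const η)).pos_part
          fun t => le_max_left _ _

theorem tendsto_integral_max_add_atTop [IsFiniteMeasure μ] [NeZero μ] (hf : Integrable f μ) :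
    Tendsto (fun η => ∫ t, max (f t + η) 0 ∂μ) atTop atTop := by
  refine tendsto_atTop_mono (integral_add_mul_le_integral_max_add hf) ?_
  exact tendsto_atTop_add_const_left _ _
    (tendsto_id.atTop_mul_const measureReal_univ_pos)

theorem exists_sum_integral_max_add_eq {ι : Type*} [Fintype ι] [Nonempty ι]
    [IsFiniteMeasure μ] [NeZero μ] {g : ι → α → ℝ} (hg : ∀ i, Integrable (g i) μ)
    {Q : ℝ} (hQ : 0 < Q) : ∃ η, ∑ i, ∫ t, max (g i t + η) 0 ∂μ = Q := by
  set F : ℝ → ℝ := fun η => ∑ i, ∫ t, max (g i t + η) 0 ∂μ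
  have hcont : Continuous F :=
    continuous_finsetSum _ fun i _ => (lipschitzWith_integral_max_add (hg i)).continuous
  have hbot : Tendsto F atBot (𝓝 0) := by
    simpa using tendsto_finsetSum Finset.univ fun i _ => tendsto_integral_max_add_atBot (hg i)
  have htop : Tendsto F atTop atTop := by
    obtain ⟨i⟩ := ‹Nonempty ι›
    refine tendsto_atTop_mono (fun η => ?_) (tendsto_integral_max_add_atTop (hg i))
    exact Finset.single_le_sum (f := fun j => ∫ t, max (g j t + η) 0 ∂μ)
      (fun j _ => integral_nonneg fun t => le_max_right _ _) (Finset.mem_univ i)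
  exact mem_range_of_exists_le_of_exists_ge hcont (hbot.eventually_le_const hQ).exists
    (htop.eventually_ge_atTop Q).exists

end PositivePartShift

/-- the dual equation ∑_p ∫_{t₀}^{t_f} [g_p(t) + η]_+ dt = Q of Step 2
of the day-to-day algorithm always has a solution η when Q > 0. -/
theorem dual_equation_solvable {P : Type*} [Fintype P] [Nonempty P]
    (t₀ t_f : ℝ) (ht : t₀ < t_f) (g : P → ℝ → ℝ)
    (hg : ∀ p, IntegrableOn (g p) (Set.Icc t₀ t_f)) (Q : ℝ) (hQ : 0 < Q) :
    ∃ η : ℝ, ∑ p, ∫ t in Set.Icc t₀ t_f, max (g p t + η) 0 = Q := by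
  have : NeZero (volume.restrict (Set.Icc t₀ t_f)) :=
    ⟨by simpa [Measure.restrict_eq_zero] using ht⟩
  exact exists_sum_integral_max_add_eq hg hQ
end

section
/- Let g ∈ (L²[t₀,t_f])^P and suppose for each w ∈ W there is η_w ∈ ℝ with ∑_{p : od(p)=w} ∫_{t₀}^{t_f} max(g_p(t) + η_w, 0) dt = Q_w. Define h*_p(t) = max(g_p(t) + η_{od(p)}, 0). Then h* is the minimum-norm projection of g onto Λ: for every h ∈ Λ, ∑_{p∈P} ‖h_p − g_p‖²_{L²} ≥ ∑_{p∈P} ‖h*_p − g_p‖²_{L²}, with equality only if h = h* (as elements of (L²)^P). In particular the explicit update in Step 3 of the day-to-day algorithm realizes the projection h^{τ+1} = P_Λ[h^τ − λΦ^ε(·, h^τ)]. -/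
/-!
`h* = (g + η)₊` satisfies the variational inequality of the projection onto `Λ`. For `h ∈ Λ`,
pointwise `(h* - g)(h - h*) ≥ η (h - h*)`: with equality where `g + η ≥ 0`, and where
`h* = 0` it reads `-g h ≥ η h`, true as `h ≥ 0 > g + η`. Integrating and summing over paths,
the right-hand side becomes `∑_w η_w (Q_w - Q_w) = 0`, so `∑_p ⟪h_p - h*_p, h*_p - g_p⟫ ≥ 0`,
and expanding `‖h - g‖² = ‖(h - h*) + (h* - g)‖²` gives the claim.
-/

open MeasureTheory

theorem mul_sub_max_le_max_sub_mul_sub {a c x : ℝ} (hx : 0 ≤ x) :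
    c * (x - max (a + c) 0) ≤ (max (a + c) 0 - a) * (x - max (a + c) 0) := by
  rcases le_total 0 (a + c) with hac | hac
  · rw [max_eq_left hac]; exact le_of_eq (by ring)
  · rw [max_eq_right hac]; nlinarith

theorem sum_norm_sub_sq_le_and_eq_of_sum_inner_nonneg {ι E : Type*} [Fintype ι]
    [NormedAddCommGroup E] [InnerProductSpace ℝ E] {f g h : ι → E}
    (hinner : 0 ≤ ∑ i, inner ℝ (h i - f i) (f i - g i)) :
    (∑ i, ‖f i - g i‖ ^ 2 ≤ ∑ i, ‖h i - g i‖ ^ 2) ∧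
      (∑ i, ‖h i - g i‖ ^ 2 = ∑ i, ‖f i - g i‖ ^ 2 → h = f) := by
  have hexpand : ∑ i, ‖h i - g i‖ ^ 2 = ∑ i, ‖h i - f i‖ ^ 2
      + 2 * ∑ i, inner ℝ (h i - f i) (f i - g i) + ∑ i, ‖f i - g i‖ ^ 2 := by
    simp only [Finset.mul_sum, ← Finset.sum_add_distrib]
    refine Finset.sum_congr rfl fun i _ => ?_
    rw [← sub_add_sub_cancel (h i) (f i) (g i), norm_add_sq_real]
  have hnonneg : ∀ i ∈ Finset.univ, 0 ≤ ‖h i - f i‖ ^ 2 := fun i _ => sq_nonneg _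
  refine ⟨by linarith [Finset.sum_nonneg hnonneg], fun heq => funext fun i => ?_⟩
  have hzero : ∑ i, ‖h i - f i‖ ^ 2 = 0 := by linarith [Finset.sum_nonneg hnonneg]
  have hi := (Finset.sum_eq_zero_iff_of_nonneg hnonneg).mp hzero i (Finset.mem_univ i)
  rwa [sq_eq_zero_iff, norm_eq_zero, sub_eq_zero] at hi

theorem sum_mul_sub_eq_zero_of_fiber_sums_eq {ι κ : Type*} [Fintype ι] [Fintype κ]
    [DecidableEq κ] (φ : ι → κ) (c : κ → ℝ) {a b : ι → ℝ}
    (hab : ∀ k, ∑ i ∈ Finset.univ.filter (fun i => φ i = k), a i =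
      ∑ i ∈ Finset.univ.filter (fun i => φ i = k), b i) :
    ∑ i, c (φ i) * (a i - b i) = 0 := by
  rw [← Finset.sum_fiberwise Finset.univ φ]
  refine Finset.sum_eq_zero fun k _ => ?_
  rw [Finset.sum_congr rfl fun i hi => by rw [(Finset.mem_filter.mp hi).2],
    ← Finset.mul_sum, Finset.sum_sub_distrib, hab k, sub_self, mul_zero]

namespace MeasureTheory.L2

variable {α : Type*} [MeasurableSpace α] {μ : Measure α}

theorem mul_integral_sub_le_inner_of_ae_eq_max [IsFiniteMeasure μ] {f g h : Lp ℝ 2 μ} {c : ℝ}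
    (hf : f =ᵐ[μ] fun t => max (g t + c) 0) (hh : 0 ≤ᵐ[μ] h) :
    c * (∫ t, h t ∂μ - ∫ t, f t ∂μ) ≤ inner ℝ (h - f) (f - g) := by
  have hintegrable : ∀ u : Lp ℝ 2 μ, Integrable u μ :=
    fun u => (Lp.memLp u).integrable (by norm_num)
  rw [L2.inner_def, ← integral_sub (hintegrable h) (hintegrable f), ← integral_const_mul]
  refine integral_mono_ae ((hintegrable h).sub (hintegrable f) |>.const_mul c)
    (L2.integrable_inner (h - f) (f - g)) ?_
  filter_upwards [Lp.coeFn_sub h f, Lp.coeFn_sub f g, hf, hh] with t hhf hfg hft hht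
  simp only [hhf, hfg, Pi.sub_apply, hft, RCLike.inner_apply, conj_trivial]
  exact mul_sub_max_le_max_sub_mul_sub hht

end MeasureTheory.L2

theorem step3_update_is_projection_general {P W : Type*} [Fintype P] [Fintype W] [DecidableEq W]
    (t₀ t_f : ℝ) (od : P → W) (Q : W → ℝ)
    (Λ : Set (P → Lp ℝ 2 (volume.restrict (Set.Icc t₀ t_f))))
    (hΛ : Λ = {h | (∀ p, 0 ≤ᵐ[volume.restrict (Set.Icc t₀ t_f)] (h p : ℝ → ℝ)) ∧
      ∀ w : W, ∑ p ∈ Finset.univ.filter (fun p => od p = w),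
        ∫ t, (h p : ℝ → ℝ) t ∂(volume.restrict (Set.Icc t₀ t_f)) = Q w})
    (g : P → Lp ℝ 2 (volume.restrict (Set.Icc t₀ t_f))) (η : W → ℝ)
    (hη : ∀ w : W, ∑ p ∈ Finset.univ.filter (fun p => od p = w),
      ∫ t, max ((g p : ℝ → ℝ) t + η w) 0 ∂(volume.restrict (Set.Icc t₀ t_f)) = Q w)
    (hm : ∀ p, MemLp (fun t => max ((g p : ℝ → ℝ) t + η (od p)) 0) 2
      (volume.restrict (Set.Icc t₀ t_f))) :
    (fun p => (hm p).toLp _) ∈ Λ ∧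
    ∀ h ∈ Λ,
      (∑ p, ‖(hm p).toLp _ - g p‖ ^ 2 ≤ ∑ p, ‖h p - g p‖ ^ 2) ∧
      (∑ p, ‖h p - g p‖ ^ 2 = ∑ p, ‖(hm p).toLp _ - g p‖ ^ 2 →
        h = fun p => (hm p).toLp _) := by
  subst hΛ
  have hfiber_integrals : ∀ w, ∑ p ∈ Finset.univ.filter (fun p => od p = w),
      ∫ t, ((hm p).toLp _ : ℝ → ℝ) t ∂(volume.restrict (Set.Icc t₀ t_f)) = Q w := by
    intro w
    rw [← hη w]
    refine Finset.sum_congr rfl fun p hp => ?_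
    rw [integral_congr_ae (hm p).coeFn_toLp, (Finset.mem_filter.mp hp).2]
  refine ⟨⟨fun p => ?_, hfiber_integrals⟩, fun h ⟨hpos, hsum⟩ => ?_⟩
  · filter_upwards [(hm p).coeFn_toLp] with t ht
    exact ht ▸ le_max_right _ _
  refine sum_norm_sub_sq_le_and_eq_of_sum_inner_nonneg ?_
  calc (0 : ℝ) = ∑ p, η (od p) * (∫ t, (h p : ℝ → ℝ) t ∂(volume.restrict (Set.Icc t₀ t_f))
        - ∫ t, ((hm p).toLp _ : ℝ → ℝ) t ∂(volume.restrict (Set.Icc t₀ t_f))) :=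
      (sum_mul_sub_eq_zero_of_fiber_sums_eq od η fun w => by
        rw [hsum w, hfiber_integrals w]).symm
    _ ≤ _ := Finset.sum_le_sum fun p _ =>
      L2.mul_integral_sub_le_inner_of_ae_eq_max (hm p).coeFn_toLp (hpos p)

/-- the explicit Step 3 update h*_p(t) = [g_p(t) + η_{od(p)}]₊ realizes
the minimum-norm projection of g onto Λ: h* ∈ Λ, every h ∈ Λ has distance to g
(measured by ∑_p ‖h_p − g_p‖²_{L²}) at least that of h*, and equality forces h = h*. -/
theorem step3_update_is_projection {P W : Type*} [Fintype P] [Fintype W] [DecidableEq W]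
    (t₀ t_f : ℝ) (ht : t₀ < t_f) (od : P → W) (Q : W → ℝ) (hQ : ∀ w, 0 ≤ Q w)
    (Λ : Set (P → Lp ℝ 2 (volume.restrict (Set.Icc t₀ t_f))))
    (hΛ : Λ = {h | (∀ p, 0 ≤ᵐ[volume.restrict (Set.Icc t₀ t_f)] (h p : ℝ → ℝ)) ∧
      ∀ w : W, ∑ p ∈ Finset.univ.filter (fun p => od p = w),
        ∫ t, (h p : ℝ → ℝ) t ∂(volume.restrict (Set.Icc t₀ t_f)) = Q w})
    (g : P → Lp ℝ 2 (volume.restrict (Set.Icc t₀ t_f))) (η : W → ℝ)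
    (hη : ∀ w : W, ∑ p ∈ Finset.univ.filter (fun p => od p = w),
      ∫ t, max ((g p : ℝ → ℝ) t + η w) 0 ∂(volume.restrict (Set.Icc t₀ t_f)) = Q w)
    (hm : ∀ p, MemLp (fun t => max ((g p : ℝ → ℝ) t + η (od p)) 0) 2
      (volume.restrict (Set.Icc t₀ t_f))) :
    (fun p => (hm p).toLp _) ∈ Λ ∧
    ∀ h ∈ Λ,
      (∑ p, ‖(hm p).toLp _ - g p‖ ^ 2 ≤ ∑ p, ‖h p - g p‖ ^ 2) ∧
      (∑ p, ‖h p - g p‖ ^ 2 = ∑ p, ‖(hm p).toLp _ - g p‖ ^ 2 →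
        h = fun p => (hm p).toLp _) :=
  step3_update_is_projection_general t₀ t_f od Q Λ hΛ g η hη hm
end
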